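/- Let r ≥ 2 and let H be an r-uniform hypergraph on n vertices with more than (t-1)·C(n, r-1) edges. Then H contains (as a subhypergraph) every tight r-tree T having t edges. -/

import Mathlib

/-- `TightSeq r es` says that the list of `r`-sets `es` (with the *last* added
edge at the head) is a valid construction sequence of a tight `r`-tree:
the last list entry is an arbitrary `r`-set, and every edge `e` added later
contains exactly one vertex `v` not belonging to the previously constructed
hypergraph, with `e \ {v}` contained in some previous edge. -/
def TightSeq {α : Type} [DecidableEq α] (r : ℕ) : List (Finset α) → Prop
  | [] => False
  | [e] => e.card = r
  | e :: f :: rest =>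
      e.card = r ∧
      (∃ v ∈ e, v ∉ List.foldr (· ∪ ·) (∅ : Finset α) (f :: rest) ∧
        ∃ g ∈ f :: rest, e \ {v} ⊆ g) ∧
      TightSeq r (f :: rest)

/-- A tight `r`-tree is an `r`-uniform hypergraph (given by its edge set)
that can be built by a tight construction sequence. -/
def IsTightTree {α : Type} [DecidableEq α] (r : ℕ) (T : Finset (Finset α)) : Prop :=
  ∃ es : List (Finset α), TightSeq r es ∧ es.toFinset = T

/-- A hypergraph `H` contains a hypergraph `T` if there is a map from the
vertices of `T` to the vertices of `H`, injective on the vertex set of `T`,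
sending every edge of `T` to an edge of `H`. -/
def HContains {α β : Type} [DecidableEq α] [DecidableEq β]
    (H : Finset (Finset α)) (T : Finset (Finset β)) : Prop :=
  ∃ f : β → α, Set.InjOn f ↑(T.sup id) ∧ ∀ e ∈ T, e.image f ∈ H

/-!
Repeatedly deleting all edges through an `(r-1)`-set that lies in at least one but fewer than
`t` edges removes at most `(t-1)·C(n, r-1)` edges in total, so a nonempty subgraph `H'` remains
in which every `(r-1)`-set lies in no edge or in at least `t` edges. A tight tree with `t` edges
is then embedded into `H'` greedily, edge by edge: the new edge shares an `(r-1)`-set with an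
embedded edge, so its image lies in at least `t` edges of `H'`; once `i < t` edges are embedded,
only `i` used vertices lie outside that image, so one of these edges has a fresh last vertex.
-/

open Finset Function

variable {α β : Type}

def verts [DecidableEq β] (es : List (Finset β)) : Finset β := es.foldr (· ∪ ·) ∅

@[simp] lemma verts_nil [DecidableEq β] : verts ([] : List (Finset β)) = ∅ := rfl

@[simp] lemma verts_cons [DecidableEq β] (e : Finset β) (es : List (Finset β)) :
    verts (e :: es) = e ∪ verts es := rfl

lemma subset_verts_of_mem [DecidableEq β] {e : Finset β} {es : List (Finset β)} (he : e ∈ es) :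
    e ⊆ verts es := by
  induction es with
  | nil => cases he
  | cons f es ih =>
    rcases List.mem_cons.1 he with rfl | he
    · exact subset_union_left
    · exact (ih he).trans subset_union_right

lemma sup_id_toFinset [DecidableEq β] (es : List (Finset β)) : es.toFinset.sup id = verts es := by
  induction es with
  | nil => rfl
  | cons e es ih => simp [sup_insert, ih]

lemma union_subset_insert_of_sdiff_subset [DecidableEq β] {e W : Finset β} {v : β}
    (h : e \ {v} ⊆ W) :
    e ∪ W ⊆ insert v W :=
  union_subset (by rw [insert_eq]; exact sdiff_le_iff.1 h) (subset_insert v W)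

namespace TightSeq

lemma nodup [DecidableEq β] {r : ℕ} : ∀ {es : List (Finset β)}, TightSeq r es → es.Nodup
  | [], h => h.elim
  | [e], _ => List.nodup_singleton e
  | _ :: _ :: _, ⟨_, ⟨_, hv, hvW, _⟩, hes⟩ =>
    List.nodup_cons.2 ⟨fun he => hvW (subset_verts_of_mem he hv), hes.nodup⟩

lemma card_verts_le [DecidableEq β] {r : ℕ} :
    ∀ {es : List (Finset β)}, TightSeq r es → #(verts es) ≤ r - 1 + es.length
  | [], h => h.elim
  | [e], (he : #e = r) => by
    simp only [verts_cons, verts_nil, union_empty, List.length_singleton, he]; omega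
  | e :: e' :: rest, ⟨_, ⟨v, _, _, g, hg, hsub⟩, hes⟩ => by
    have hW := union_subset_insert_of_sdiff_subset (hsub.trans (subset_verts_of_mem hg))
    calc #(verts (e :: e' :: rest)) ≤ #(verts (e' :: rest)) + 1 :=
          (card_le_card hW).trans (card_insert_le _ _)
      _ ≤ r - 1 + (e :: e' :: rest).length := by
          have := hes.card_verts_le; simp only [List.length_cons] at this ⊢; omega

end TightSeq

def codegree [DecidableEq α] (H : Finset (Finset α)) (S : Finset α) : ℕ := #{e ∈ H | S ⊆ e}

def HasLargeCodegrees [DecidableEq α] (k t : ℕ) (H : Finset (Finset α)) : Prop :=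
  ∀ S : Finset α, #S = k → (∃ e ∈ H, S ⊆ e) → t ≤ codegree H S

/-- Deleting the edges through a `k`-set of codegree less than `t` removes fewer than `t` edges
and leaves that set in no edge, so it is never deleted again. -/
theorem exists_subset_hasLargeCodegrees [DecidableEq α] (k t : ℕ) (𝒮 : Finset (Finset α)) :
    ∀ H : Finset (Finset α), (∀ e ∈ H, ∀ S ⊆ e, #S = k → S ∈ 𝒮) →
      ∃ H' ⊆ H, HasLargeCodegrees k t H' ∧ #H ≤ #H' + (t - 1) * #𝒮 := by
  induction 𝒮 using Finset.strongInduction with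
  | _ 𝒮 ih =>
  intro H h𝒮
  by_cases hH : HasLargeCodegrees k t H
  · exact ⟨H, subset_rfl, hH, Nat.le_add_right _ _⟩
  simp only [HasLargeCodegrees, not_forall, not_le, exists_prop] at hH
  obtain ⟨S, hSk, ⟨e, he, hSe⟩, hlow⟩ := hH
  have hS : S ∈ 𝒮 := h𝒮 e he S hSe hSk
  obtain ⟨H', hH'sub, hH', hcard⟩ := ih (𝒮.erase S) (erase_ssubset hS) {e ∈ H | ¬S ⊆ e}
    fun e he S' hS'e hS'k => mem_erase.2
      ⟨by rintro rfl; exact (mem_filter.1 he).2 hS'e, h𝒮 e (mem_filter.1 he).1 S' hS'e hS'k⟩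
  refine ⟨H', hH'sub.trans (filter_subset _ _), hH', ?_⟩
  have hsplit := card_filter_add_card_filter_not (s := H) (S ⊆ ·)
  rw [← card_erase_add_one hS, mul_add_one]
  unfold codegree at hlow
  omega

/-- The edges through `S` are the sets `insert x S`, and fewer than `t` of them have `x ∈ U`. -/
theorem exists_insert_mem_of_le_codegree [DecidableEq α] {k t : ℕ} {H : Finset (Finset α)}
    (hu : ∀ e ∈ H, #e = k + 1) {S U : Finset α} (hS : #S = k) (hSU : S ⊆ U)
    (hdeg : t ≤ codegree H S) (hU : #U < t + k) : ∃ x ∉ U, insert x S ∈ H := by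
  by_contra! hnot
  have hsub : {e ∈ H | S ⊆ e} ⊆ (U \ S).image (insert · S) := by
    intro e he
    rw [mem_filter] at he
    obtain ⟨x, hxS, rfl⟩ := exists_eq_insert_iff.2 ⟨he.2, by rw [hS, hu _ he.1]⟩
    exact mem_image.2 ⟨x, mem_sdiff.2 ⟨by_contra fun hxU => hnot x hxU he.1, hxS⟩, rfl⟩
  have := (card_le_card hsub).trans card_image_le
  rw [card_sdiff_of_subset hSU] at this
  have := card_le_card hSU
  unfold codegree at hdeg
  omega

lemma Set.InjOn.update_insert [DecidableEq β] {f : β → α} {W : Set β} {v : β} {x : α}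
    (hf : Set.InjOn f W) (hv : v ∉ W) (hx : x ∉ f '' W) :
    Set.InjOn (update f v x) (insert v W) := by
  have hfW : Set.EqOn f (update f v x) W := fun w hw =>
    (update_of_ne (ne_of_mem_of_not_mem hw hv) x f).symm
  rw [Set.injOn_insert hv, update_self, ← hfW.image_eq]
  exact ⟨hf.congr hfW, hx⟩

lemma exists_injOn_image_eq_of_card_eq [DecidableEq α] [Nonempty α] {e : Finset β}
    {h : Finset α} (hcard : #e = #h) : ∃ f : β → α, Set.InjOn f e ∧ e.image f = h := by
  obtain ⟨f, hf⟩ := e.finite_toSet.exists_bijOn_of_encard_eq (t := (h : Set α)) (by simpa)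
  exact ⟨f, hf.injOn, coe_injective (by simpa using hf.image_eq)⟩

theorem TightSeq.exists_embedding [DecidableEq α] [DecidableEq β] {k t : ℕ}
    {H : Finset (Finset α)} (hu : ∀ e ∈ H, #e = k + 1) (hne : H.Nonempty)
    (hdeg : HasLargeCodegrees k t H) :
    ∀ {es : List (Finset β)}, TightSeq (k + 1) es → es.length ≤ t →
      ∃ f : β → α, Set.InjOn f (verts es) ∧ ∀ e ∈ es, e.image f ∈ H
  | [], h, _ => h.elim
  | [e], he, _ => by
    obtain ⟨h, hH⟩ := hne
    have hcard : #e = #h := by rw [hu h hH]; exact he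
    obtain ⟨a, -⟩ := card_pos.1 (by rw [hu h hH]; omega)
    have : Nonempty α := ⟨a⟩
    obtain ⟨f, hf, himage⟩ := exists_injOn_image_eq_of_card_eq hcard
    exact ⟨f, by simpa using hf, by simpa [himage] using hH⟩
  | e :: e' :: rest, ⟨he, ⟨v, hv, hvW, g, hg, hsub⟩, hes⟩, hlen => by
    obtain ⟨f, hf, hfH⟩ :=
      hes.exists_embedding hu hne hdeg (by simp only [List.length_cons] at hlen ⊢; omega)
    have heW : e \ {v} ⊆ verts (e' :: rest) := hsub.trans (subset_verts_of_mem hg)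
    set S := (e \ {v}).image f
    have hS : #S = k := by
      rw [card_image_of_injOn (hf.mono (by exact_mod_cast heW)),
        card_sdiff_of_subset (singleton_subset_iff.2 hv), he, card_singleton, Nat.add_sub_cancel]
    have hU : #((verts (e' :: rest)).image f) < t + k := by
      have := hes.card_verts_le
      simp only [List.length_cons, Nat.add_sub_cancel] at this hlen
      rw [card_image_of_injOn hf]
      omega
    obtain ⟨x, hxU, hxH⟩ := exists_insert_mem_of_le_codegree hu hS (image_subset_image heW)
      (hdeg S hS ⟨g.image f, hfH g hg, image_subset_image hsub⟩) hU
    have hfW : Set.EqOn (update f v x) f (verts (e' :: rest)) := fun w hw =>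
      update_of_ne (ne_of_mem_of_not_mem hw hvW) x f
    refine ⟨update f v x, ?_, ?_⟩
    · refine (hf.update_insert hvW (by simpa using hxU)).mono ?_
      exact_mod_cast union_subset_insert_of_sdiff_subset heW
    · intro d hd
      rcases List.mem_cons.1 hd with rfl | hd
      · rw [← insert_erase hv, image_insert, update_self, ← sdiff_singleton_eq_erase,
          image_congr (hfW.mono (by exact_mod_cast heW))]
        exact hxH
      · rw [image_congr (hfW.mono (by exact_mod_cast subset_verts_of_mem hd))]
        exact hfH d hd

/-- **Greedy bound.** Let `r ≥ 2` and let `H` be an `r`-uniform hypergraph on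
`n` vertices with more than `(t-1)·C(n, r-1)` edges. Then `H` contains every
tight `r`-tree with `t` edges. -/
theorem kalai_weak_bound {α : Type} [DecidableEq α] [Fintype α] (r t n : ℕ) (hr : 2 ≤ r)
    (hn : Fintype.card α = n)
    (H : Finset (Finset α)) (hunif : ∀ e ∈ H, e.card = r)
    (hcard : ((t : ℝ) - 1) * (n.choose (r - 1)) < H.card) :
    ∀ (β : Type) [DecidableEq β] (T : Finset (Finset β)),
      IsTightTree r T → T.card = t → HContains H T := by
  intro β _ T ⟨es, hes, hesT⟩ hTt
  obtain ⟨k, rfl⟩ : ∃ k, r = k + 1 := ⟨r - 1, by omega⟩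
  have hlen : es.length = t := by rw [← hTt, ← hesT, List.toFinset_card_of_nodup hes.nodup]
  have ht : 1 ≤ t := hlen ▸ List.length_pos_iff.2 (by rintro rfl; exact hes)
  have hbound : (t - 1) * n.choose k < #H := by
    rw [Nat.add_sub_cancel, ← Nat.cast_one, ← Nat.cast_sub ht] at hcard
    exact_mod_cast hcard
  obtain ⟨H', hH'H, hH', hcardH'⟩ := exists_subset_hasLargeCodegrees k t (univ.powersetCard k) H
    fun _ _ S _ hS => mem_powersetCard.2 ⟨subset_univ S, hS⟩
  rw [card_powersetCard, card_univ, hn] at hcardH'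
  obtain ⟨f, hf, hfH'⟩ := hes.exists_embedding (fun e he => hunif e (hH'H he))
    (card_pos.1 (by omega)) hH' hlen.le
  refine ⟨f, by rwa [← hesT, sup_id_toFinset], fun e he => hH'H (hfH' e ?_)⟩
  rwa [← hesT, List.mem_toFinset] at he
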